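/- For an odd prime p, an integer r ≥ 1, and δ ∈ ℤ/p^rℤ with p | δ, the number of triples (A,B,C) ∈ (ℤ/p^rℤ)³ with p ∤ gcd(A,B,C) and B² − 4AC ≡ δ (mod p^r) equals p^{2r−2}(p²−1). -/

import Mathlib

/-!
In a local ring `R` with `2` invertible and `δ` in the maximal ideal `m`, the relation
`b ^ 2 = δ + 4 * a * c` gives `b ∈ m ↔ a ∈ m ∨ c ∈ m`. Hence a primitive solution either has `a`
a unit, or has `a ∈ m`, `b ∈ m` and `c` a unit; in both cases the unit coefficient and `b` determine
the remaining coefficient. This gives `|Rˣ| * (|R| + |m|)` solutions, which for `R = ZMod (p ^ r)`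
is `p ^ (r - 1) * (p - 1) * (p ^ r + p ^ (r - 1)) = p ^ (2 * r - 2) * (p ^ 2 - 1)`.
-/

open IsLocalRing

section Discriminant

variable {R : Type*} [CommRing R]

lemma sq_sub_units_mul_eq_iff (w : Rˣ) (b c δ : R) :
    b ^ 2 - w * c = δ ↔ c = ↑w⁻¹ * (b ^ 2 - δ) := by
  rw [Units.eq_inv_mul_iff_mul_eq, eq_sub_iff_add_eq, add_comm, ← eq_sub_iff_add_eq, eq_comm]

noncomputable def discEqEquivOfIsUnit (h4 : IsUnit (4 : R)) (δ : R) (P : R → Prop) :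
    {x : R × R × R // IsUnit x.1 ∧ P x.2.1 ∧ x.2.1 ^ 2 - 4 * x.1 * x.2.2 = δ} ≃
      Rˣ × {b : R // P b} where
  toFun x := (x.2.1.unit, ⟨x.1.2.1, x.2.2.1⟩)
  invFun y := ⟨(y.1, y.2, ↑(h4.unit * y.1)⁻¹ * (y.2 ^ 2 - δ)), y.1.isUnit, y.2.2,
    (sq_sub_units_mul_eq_iff (h4.unit * y.1) _ _ _).2 rfl⟩
  left_inv := by
    rintro ⟨⟨a, b, c⟩, ha, -, hdisc⟩
    have hc := (sq_sub_units_mul_eq_iff (h4.unit * ha.unit) b c δ).1 hdisc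
    simp_all
  right_inv _ := Prod.ext (Units.ext rfl) rfl

end Discriminant

section LocalRing

variable {R : Type*} [CommRing R] [IsLocalRing R]

lemma card_eq_card_units_add_card_maximalIdeal [Finite R] :
    Nat.card R = Nat.card Rˣ + Nat.card (maximalIdeal R) := by
  classical
  rw [← Nat.card_congr (Equiv.sumCompl IsUnit), Nat.card_sum,
    ← Nat.card_range_of_injective Units.val_injective]
  rfl

lemma mem_maximalIdeal_iff_of_sq_sub_four_mul_eq (h4 : IsUnit (4 : R)) {a b c δ : R}
    (hδ : δ ∈ maximalIdeal R) (h : b ^ 2 - 4 * a * c = δ) :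
    b ∈ maximalIdeal R ↔ a ∈ maximalIdeal R ∨ c ∈ maximalIdeal R := by
  have h4m : (4 : R) ∉ maximalIdeal R := notMem_maximalIdeal.2 h4
  have hm : (maximalIdeal R).IsPrime := inferInstance
  rw [← hm.pow_mem_iff_mem 2 two_pos, ← sub_add_cancel (b ^ 2) δ, Ideal.add_mem_iff_left _ hδ, ← h,
    sub_sub_cancel, hm.mul_mem_iff_mem_or_mem, hm.mul_mem_iff_mem_or_mem, or_assoc,
    or_iff_right h4m]

theorem card_primitive_sq_sub_four_mul_eq [Finite R] (h2 : IsUnit (2 : R)) {δ : R}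
    (hδ : δ ∈ maximalIdeal R) :
    Nat.card {x : R × R × R // ¬(x.1 ∈ maximalIdeal R ∧ x.2.1 ∈ maximalIdeal R ∧
        x.2.2 ∈ maximalIdeal R) ∧ x.2.1 ^ 2 - 4 * x.1 * x.2.2 = δ} =
      Nat.card Rˣ * (Nat.card R + Nat.card (maximalIdeal R)) := by
  classical
  have h4 : IsUnit (4 : R) := by convert h2.mul h2; norm_num
  rw [← Nat.card_congr (Equiv.sumCompl fun x => IsUnit x.1.1), Nat.card_sum, mul_add,
    ← Nat.card_subtype_true (α := R), ← Nat.card_prod, ← Nat.card_prod]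
  congr 1
  · refine Nat.card_congr <| (Equiv.subtypeSubtypeEquivSubtypeInter _ fun x => IsUnit x.1).trans <|
      (Equiv.subtypeEquivRight ?_).trans (discEqEquivOfIsUnit h4 δ _)
    rintro ⟨a, b, c⟩
    simp only [← notMem_maximalIdeal, true_and]
    tauto
  · let swap : R × R × R ≃ R × R × R :=
      ⟨fun x => (x.2.2, x.2.1, x.1), fun x => (x.2.2, x.2.1, x.1), fun _ => rfl, fun _ => rfl⟩
    refine Nat.card_congr <| (Equiv.subtypeSubtypeEquivSubtypeInter _ fun x => ¬IsUnit x.1).trans <|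
      (swap.subtypeEquiv ?_).trans (discEqEquivOfIsUnit h4 δ (· ∈ maximalIdeal R))
    rintro ⟨a, b, c⟩
    simp only [swap, ← notMem_maximalIdeal, not_not, Equiv.coe_fn_mk]
    constructor
    · rintro ⟨⟨hprim, hdisc⟩, ha⟩
      have hb := (mem_maximalIdeal_iff_of_sq_sub_four_mul_eq h4 hδ hdisc).2 (Or.inl ha)
      exact ⟨fun hc => hprim ⟨ha, hb, hc⟩, hb, by linear_combination hdisc⟩
    · rintro ⟨hc, hb, hdisc⟩
      have hdisc' : b ^ 2 - 4 * a * c = δ := by linear_combination hdisc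
      have ha := ((mem_maximalIdeal_iff_of_sq_sub_four_mul_eq h4 hδ hdisc').1 hb).resolve_right hc
      exact ⟨⟨fun h => hc h.2.2, hdisc'⟩, ha⟩

end LocalRing

namespace ZMod

variable {p r : ℕ}

lemma isUnit_iff_not_natCast_dvd (hp : p.Prime) (hr : 0 < r) (x : ZMod (p ^ r)) :
    IsUnit x ↔ ¬(p : ZMod (p ^ r)) ∣ x := by
  have : NeZero (p ^ r) := ⟨pow_ne_zero r hp.ne_zero⟩
  refine ⟨?_, fun hx => ?_⟩
  · rintro hx ⟨y, rfl⟩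
    exact prime_natCast_not_isUnit_pow hp hr (isUnit_of_mul_isUnit_left hx)
  · rw [← natCast_zmod_val x, isUnit_natCast_iff_not_dvd_pow hp hr]
    exact fun hdvd => hx (natCast_zmod_val x ▸ Nat.cast_dvd_cast hdvd)

lemma isLocalRing_prime_pow (hp : p.Prime) (hr : 0 < r) : IsLocalRing (ZMod (p ^ r)) :=
  have : Fact (1 < p ^ r) := ⟨Nat.one_lt_pow hr.ne' hp.one_lt⟩
  IsLocalRing.of_nonunits_add fun a b ha hb => by
    simp only [mem_nonunits_iff, isUnit_iff_not_natCast_dvd hp hr, not_not] at *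
    exact dvd_add ha hb

lemma mem_maximalIdeal_prime_pow_iff [IsLocalRing (ZMod (p ^ r))] (hp : p.Prime) (hr : 0 < r)
    (x : ZMod (p ^ r)) : x ∈ maximalIdeal (ZMod (p ^ r)) ↔ (p : ZMod (p ^ r)) ∣ x := by
  rw [← not_iff_not, notMem_maximalIdeal, isUnit_iff_not_natCast_dvd hp hr]

lemma card_units_prime_pow (hp : p.Prime) (hr : 0 < r) :
    Nat.card (ZMod (p ^ r))ˣ = p ^ (r - 1) * (p - 1) := by
  have : NeZero (p ^ r) := ⟨pow_ne_zero r hp.ne_zero⟩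
  rw [Nat.card_eq_fintype_card, card_units_eq_totient, Nat.totient_prime_pow hp hr]

lemma card_maximalIdeal_prime_pow [IsLocalRing (ZMod (p ^ r))] (hp : p.Prime) (hr : 0 < r) :
    Nat.card (maximalIdeal (ZMod (p ^ r))) = p ^ (r - 1) := by
  have : NeZero (p ^ r) := ⟨pow_ne_zero r hp.ne_zero⟩
  have hcard := card_eq_card_units_add_card_maximalIdeal (R := ZMod (p ^ r))
  rw [Nat.card_zmod, card_units_prime_pow hp hr] at hcard
  have : p ^ r = p ^ (r - 1) * (p - 1) + p ^ (r - 1) := by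
    rw [← pow_sub_one_mul hr.ne', ← Nat.mul_add_one, Nat.sub_add_cancel hp.one_le]
  omega

end ZMod

theorem stmt_4 (p r : ℕ) (hp : p.Prime) (hodd : Odd p) (hr : 1 ≤ r)
    (δ : ZMod (p ^ r)) (hδ : (p : ZMod (p ^ r)) ∣ δ) :
    Nat.card {x : ZMod (p ^ r) × ZMod (p ^ r) × ZMod (p ^ r) //
        ¬ ((p : ZMod (p ^ r)) ∣ x.1 ∧ (p : ZMod (p ^ r)) ∣ x.2.1 ∧ (p : ZMod (p ^ r)) ∣ x.2.2)
        ∧ x.2.1 ^ 2 - 4 * x.1 * x.2.2 = δ}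
      = p ^ (2 * r - 2) * (p ^ 2 - 1) := by
  have : NeZero (p ^ r) := ⟨pow_ne_zero r hp.ne_zero⟩
  have := ZMod.isLocalRing_prime_pow hp hr
  have h2 : IsUnit (2 : ZMod (p ^ r)) := by
    simpa using ZMod.isUnit_prime_of_not_dvd Nat.prime_two
      fun h => hodd.not_two_dvd_nat (Nat.prime_two.dvd_of_dvd_pow h)
  simp_rw [← ZMod.mem_maximalIdeal_prime_pow_iff hp hr] at hδ ⊢
  rw [card_primitive_sq_sub_four_mul_eq h2 hδ, ZMod.card_units_prime_pow hp hr, Nat.card_zmod,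
    ZMod.card_maximalIdeal_prime_pow hp hr]
  obtain ⟨s, rfl⟩ := Nat.exists_eq_add_of_le' hr
  rw [show s + 1 - 1 = s by omega, show 2 * (s + 1) - 2 = 2 * s by omega,
    show p ^ 2 - 1 = (p + 1) * (p - 1) by simpa using Nat.sq_sub_sq p 1]
  ring
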